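/- Let D ⊆ ℝ³ be an open set and a a boundary point of D satisfying the interior cone condition at a: there exist δ > 0, K ≥ 0 and an orthogonal 3×3 real matrix A such that the set C_a = {a + A(s,t) : (s,t) ∈ ℝ² × ℝ, K‖s‖ < t, ‖s‖² + t² < δ²} is contained in D. Then there exist constants C₃ > 0 and ε > 0 such that for every x ∈ ℝ³ with 0 < ‖x − a‖ < ε, ∫_{C_a} ‖∇G(z − x)‖² dz ≥ C₃ / ‖x − a‖; in particular ∫_{D ∩ B(a,δ)} ‖∇G(z − x)‖² dz ≥ C₃ / ‖x − a‖, where B(a,δ) is the open ball of radius δ centered at a. (The lower estimate of the blow-up rate stated in Remark 1.1.) -/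

import Mathlib

/-!
Fix `x` at distance `r` from `a` and move `2r` from `a` along the axis of the cone, to
`p = a + A(0, 2r)`. The ball around `p` of radius `r / (K + 1)` lies in the cone (once `4r ≤ δ`),
does not contain `x`, and every point `z` of it satisfies `‖z − x‖ ≤ 4r`. Hence the integrand is
at least `(16π² (4r)⁴)⁻¹` on a ball of volume `≍ r³`, and the integral is `≳ 1/r`.
-/

open MeasureTheory
open scoped ENNReal

noncomputable section

/-- The identification of `ℝ² × ℝ` with `ℝ³`: `(s, t) ↦ (s₁, s₂, t)`. -/
def emb (s : EuclideanSpace ℝ (Fin 2)) (t : ℝ) : EuclideanSpace ℝ (Fin 3) :=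
  (EuclideanSpace.equiv (Fin 3) ℝ).symm ![s 0, s 1, t]

open Metric

lemma norm_emb_sq (s : EuclideanSpace ℝ (Fin 2)) (t : ℝ) : ‖emb s t‖ ^ 2 = ‖s‖ ^ 2 + t ^ 2 := by
  simp [EuclideanSpace.norm_sq_eq, Fin.sum_univ_three, Fin.sum_univ_two, emb]

lemma emb_sub_emb (s s' : EuclideanSpace ℝ (Fin 2)) (t t' : ℝ) :
    emb s t - emb s' t' = emb (s - s') (t - t') := by
  ext i; fin_cases i <;> simp [emb]

lemma exists_emb_eq (v : EuclideanSpace ℝ (Fin 3)) : ∃ s t, emb s t = v :=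
  ⟨!₂[v 0, v 1], v 2, by ext i; fin_cases i <;> simp [emb]⟩

def interiorCone (a : EuclideanSpace ℝ (Fin 3))
    (A : EuclideanSpace ℝ (Fin 3) ≃ₗᵢ[ℝ] EuclideanSpace ℝ (Fin 3)) (K δ : ℝ) :
    Set (EuclideanSpace ℝ (Fin 3)) :=
  {z | ∃ (s : EuclideanSpace ℝ (Fin 2)) (t : ℝ),
    K * ‖s‖ < t ∧ ‖s‖ ^ 2 + t ^ 2 < δ ^ 2 ∧ z = a + A (emb s t)}

section Cone

variable {a : EuclideanSpace ℝ (Fin 3)}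
  {A : EuclideanSpace ℝ (Fin 3) ≃ₗᵢ[ℝ] EuclideanSpace ℝ (Fin 3)} {K δ : ℝ}

lemma interiorCone_subset_ball (hδ : 0 ≤ δ) : interiorCone a A K δ ⊆ ball a δ := by
  rintro _ ⟨s, t, -, hst, rfl⟩
  rw [mem_ball, dist_eq_norm, add_sub_cancel_left, A.norm_map]
  exact lt_of_pow_lt_pow_left₀ 2 hδ (by rwa [norm_emb_sq])

lemma mul_norm_lt_and_sq_add_sq_lt_of_norm_emb_sub_lt (hK : 0 ≤ K) {h : ℝ} (hh : 0 < h)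
    (hhδ : 2 * h ≤ δ) {s : EuclideanSpace ℝ (Fin 2)} {t : ℝ}
    (hst : ‖emb s t - emb 0 h‖ < h / (2 * (K + 1))) :
    K * ‖s‖ < t ∧ ‖s‖ ^ 2 + t ^ 2 < δ ^ 2 := by
  set R := h / (2 * (K + 1)) with hR
  have hR_pos : 0 < R := by positivity
  have hRh : R ≤ h / 2 := by
    rw [hR, div_le_div_iff₀ (by positivity) two_pos]; nlinarith
  have hKR : K * R < h / 2 := by
    rw [hR, mul_div_assoc', div_lt_div_iff₀ (by positivity) two_pos]; nlinarith
  have hsq : ‖s‖ ^ 2 + (t - h) ^ 2 < R ^ 2 := by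
    rw [emb_sub_emb, sub_zero] at hst
    rw [← norm_emb_sq]
    exact pow_lt_pow_left₀ hst (norm_nonneg _) two_ne_zero
  have hs : ‖s‖ < R := lt_of_pow_lt_pow_left₀ 2 hR_pos.le (by nlinarith [sq_nonneg (t - h)])
  obtain ⟨ht_lo, ht_hi⟩ : -R < t - h ∧ t - h < R :=
    abs_lt.1 (abs_lt_of_sq_lt_sq (by nlinarith [sq_nonneg ‖s‖]) hR_pos.le)
  constructor
  · calc K * ‖s‖ ≤ K * R := mul_le_mul_of_nonneg_left hs.le hK
      _ < t := by linarith
  · have hs2 : ‖s‖ ^ 2 < (h / 2) ^ 2 := pow_lt_pow_left₀ (by linarith) (norm_nonneg _) two_ne_zero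
    have ht2 : t ^ 2 < (3 * h / 2) ^ 2 := pow_lt_pow_left₀ (by linarith) (by linarith) two_ne_zero
    nlinarith

lemma ball_subset_interiorCone (hK : 0 ≤ K) {h : ℝ} (hh : 0 < h) (hhδ : 2 * h ≤ δ) :
    ball (a + A (emb 0 h)) (h / (2 * (K + 1))) ⊆ interiorCone a A K δ := by
  intro z hz
  obtain ⟨s, t, hv⟩ := exists_emb_eq (A.symm (z - a))
  have hz' : z = a + A (emb s t) := by rw [hv, A.apply_symm_apply, add_sub_cancel]
  have hst : ‖emb s t - emb 0 h‖ < h / (2 * (K + 1)) := by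
    rwa [← A.norm_map, map_sub, ← add_sub_add_left_eq_sub _ _ a, ← hz', ← dist_eq_norm]
  obtain ⟨hKst, hstδ⟩ := mul_norm_lt_and_sq_add_sq_lt_of_norm_emb_sub_lt hK hh hhδ hst
  exact ⟨s, t, hKst, hstδ, hz'⟩

end Cone

lemma mul_measure_le_setLIntegral {α : Type*} [MeasurableSpace α] {μ : Measure α}
    {s t : Set α} {f : α → ℝ≥0∞} {c : ℝ≥0∞} (hs : MeasurableSet s) (hst : s ⊆ t)
    (hf : ∀ z ∈ s, c ≤ f z) : c * μ s ≤ ∫⁻ z in t, f z ∂μ :=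
  calc c * μ s = ∫⁻ _ in s, c ∂μ := (setLIntegral_const s c).symm
    _ ≤ ∫⁻ z in s, f z ∂μ := setLIntegral_mono' hs hf
    _ ≤ ∫⁻ z in t, f z ∂μ := lintegral_mono_set hst

lemma norm_sub_pos_and_le_of_mem_ball {E : Type*} [SeminormedAddCommGroup E] {a p x z : E}
    {r R : ℝ} (hp : ‖p - a‖ = 2 * r) (hx : ‖x - a‖ = r) (hR : R ≤ r) (hz : z ∈ ball p R) :
    0 < ‖z - x‖ ∧ ‖z - x‖ ≤ 4 * r := by
  have hzp : ‖z - p‖ < R := mem_ball_iff_norm.1 hz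
  have hpz := norm_sub_rev p z
  have hax := norm_sub_rev a x
  constructor
  · linarith [norm_sub_le_norm_sub_add_norm_sub p z a, norm_sub_le_norm_sub_add_norm_sub z x a]
  · linarith [norm_sub_le_norm_sub_add_norm_sub z p x, norm_sub_le_norm_sub_add_norm_sub p a x]

theorem blowup_rate_remark11_general (D : Set (EuclideanSpace ℝ (Fin 3)))
    (a : EuclideanSpace ℝ (Fin 3))
    (δ K : ℝ) (hδ : 0 < δ) (hK : 0 ≤ K)
    (A : EuclideanSpace ℝ (Fin 3) ≃ₗᵢ[ℝ] EuclideanSpace ℝ (Fin 3))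
    (C_a : Set (EuclideanSpace ℝ (Fin 3)))
    (hCa : C_a = {z | ∃ (s : EuclideanSpace ℝ (Fin 2)) (t : ℝ),
      K * ‖s‖ < t ∧ ‖s‖ ^ 2 + t ^ 2 < δ ^ 2 ∧ z = a + A (emb s t)})
    (hsub : C_a ⊆ D) :
    ∃ C₃ > (0 : ℝ), ∃ ε > (0 : ℝ), ∀ x : EuclideanSpace ℝ (Fin 3),
      0 < ‖x - a‖ → ‖x - a‖ < ε →
        (ENNReal.ofReal (C₃ / ‖x - a‖) ≤
          ∫⁻ z in C_a, ENNReal.ofReal (1 / (16 * Real.pi ^ 2 * ‖z - x‖ ^ 4))) ∧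
        (ENNReal.ofReal (C₃ / ‖x - a‖) ≤
          ∫⁻ z in D ∩ Metric.ball a δ,
            ENNReal.ofReal (1 / (16 * Real.pi ^ 2 * ‖z - x‖ ^ 4))) := by
  obtain rfl : C_a = interiorCone a A K δ := hCa
  refine ⟨(1 / (K + 1)) ^ 3 * (Real.pi * 4 / 3) / (16 * Real.pi ^ 2 * 4 ^ 4), by positivity,
    δ / 4, by positivity, fun x hx hxε => ?_⟩
  set r := ‖x - a‖
  set p := a + A (emb 0 (2 * r))
  have hp : ‖p - a‖ = 2 * r := by
    rw [add_sub_cancel_left, A.norm_map, ← sq_eq_sq₀ (norm_nonneg _) (by positivity), norm_emb_sq]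
    simp
  have hR : 2 * r / (2 * (K + 1)) ≤ r := by
    rw [div_le_iff₀ (by positivity)]; nlinarith
  have hball := ball_subset_interiorCone (a := a) (A := A) hK (by positivity : 0 < 2 * r)
    (by linarith : 2 * (2 * r) ≤ δ)
  have hf : ∀ z ∈ ball p (2 * r / (2 * (K + 1))),
      ENNReal.ofReal (1 / (16 * Real.pi ^ 2 * (4 * r) ^ 4)) ≤
        ENNReal.ofReal (1 / (16 * Real.pi ^ 2 * ‖z - x‖ ^ 4)) := by
    intro z hz
    obtain ⟨hzx_pos, hzx_le⟩ := norm_sub_pos_and_le_of_mem_ball hp rfl hR hz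
    gcongr
  have key : ENNReal.ofReal
      ((1 / (K + 1)) ^ 3 * (Real.pi * 4 / 3) / (16 * Real.pi ^ 2 * 4 ^ 4) / r) ≤
        ∫⁻ z in interiorCone a A K δ, ENNReal.ofReal (1 / (16 * Real.pi ^ 2 * ‖z - x‖ ^ 4)) := by
    refine le_trans (le_of_eq ?_) (mul_measure_le_setLIntegral measurableSet_ball hball hf)
    rw [EuclideanSpace.volume_ball_fin_three, ← ENNReal.ofReal_pow (by positivity),
      ← ENNReal.ofReal_mul (by positivity), ← ENNReal.ofReal_mul (by positivity)]
    congr 1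
    field_simp
  exact ⟨key, key.trans <|
    lintegral_mono_set (Set.subset_inter hsub (interiorCone_subset_ball hδ.le))⟩

/-- **The lower estimate of the blow-up rate in Remark 1.1.** Let `D ⊆ ℝ³` be open and
`a ∈ ∂D` satisfy the interior cone condition: for some `δ > 0`, `K ≥ 0` and an orthogonal
transformation `A` of `ℝ³`, the cone
`C_a = {a + A(s,t) : K‖s‖ < t, ‖s‖² + t² < δ²}` is contained in `D`. Then there exist
`C₃ > 0` and `ε > 0` such that for all `x` with `0 < ‖x − a‖ < ε`,
`∫_{C_a} ‖∇G(z−x)‖² dz ≥ C₃/‖x−a‖`, and in particular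
`∫_{D ∩ B(a,δ)} ‖∇G(z−x)‖² dz ≥ C₃/‖x−a‖`, where
`‖∇G(z−x)‖² = (16π²)⁻¹ ‖z−x‖⁻⁴`. -/
theorem blowup_rate_remark11 (D : Set (EuclideanSpace ℝ (Fin 3))) (hD : IsOpen D)
    (a : EuclideanSpace ℝ (Fin 3)) (ha : a ∈ frontier D)
    (δ K : ℝ) (hδ : 0 < δ) (hK : 0 ≤ K)
    (A : EuclideanSpace ℝ (Fin 3) ≃ₗᵢ[ℝ] EuclideanSpace ℝ (Fin 3))
    (C_a : Set (EuclideanSpace ℝ (Fin 3)))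
    (hCa : C_a = {z | ∃ (s : EuclideanSpace ℝ (Fin 2)) (t : ℝ),
      K * ‖s‖ < t ∧ ‖s‖ ^ 2 + t ^ 2 < δ ^ 2 ∧ z = a + A (emb s t)})
    (hsub : C_a ⊆ D) :
    ∃ C₃ > (0 : ℝ), ∃ ε > (0 : ℝ), ∀ x : EuclideanSpace ℝ (Fin 3),
      0 < ‖x - a‖ → ‖x - a‖ < ε →
        (ENNReal.ofReal (C₃ / ‖x - a‖) ≤
          ∫⁻ z in C_a, ENNReal.ofReal (1 / (16 * Real.pi ^ 2 * ‖z - x‖ ^ 4))) ∧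
        (ENNReal.ofReal (C₃ / ‖x - a‖) ≤
          ∫⁻ z in D ∩ Metric.ball a δ,
            ENNReal.ofReal (1 / (16 * Real.pi ^ 2 * ‖z - x‖ ^ 4))) :=
  blowup_rate_remark11_general D a δ K hδ hK A C_a hCa hsub
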